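/- arXiv:0908.0362 — 8 statements merged into one kernel-verified Lean document; each statement's English description precedes it below -/
import Mathlib

section
/- Suppose q*, λ*, ν* satisfy the KKT conditions for SYSTEM: q* is feasible, −U_n'(q_n*) + (Σ_{S∋n} λ_S*)/p_n − ν_n* = 0 for all n, complementary slackness λ_S*(Σ_{i∈S} q_i*/p_i − (τ−I_S)) = 0 and ν_n* q_n* = 0, with λ_S*, ν_n* ≥ 0. Define ψ_n = (Σ_{S∋n} λ_S*)/p_n and ρ_n = ψ_n q_n*. Then for every n with ψ_n > 0, ρ_n maximizes U_n(ρ/ψ_n) − ρ over ρ ∈ [0, ψ_n]... in particular ρ_n satisfies the KKT conditions of the CLIENT_n problem with multiplier ξ_n = ν_n*/ψ_n. -/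
/-! Stationarity of SYSTEM at coordinate `n` says exactly `U'_n(q_n) = ψ_n - ν_n`, so the
CLIENT_n KKT conditions follow from those of SYSTEM after dividing by `ψ_n`.  Optimality of
`ρ_n` comes from the tangent line of the concave `U_n` at `q_n`: for `y ∈ [0,1]`,
`U_n(y) ≤ U_n(q_n) + (ψ_n - ν_n)(y - q_n) ≤ U_n(q_n) + ψ_n (y - q_n)` since `ν_n y ≥ 0 = ν_n q_n`,
and the substitution `r = ψ_n y` maps `[0,1]` onto `[0, ψ_n]`. -/

lemma ConcaveOn.le_add_mul_sub_of_hasDerivWithinAt {S : Set ℝ} {f : ℝ → ℝ} {f' x y : ℝ}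
    (hf : ConcaveOn ℝ S f) (hx : x ∈ S) (hy : y ∈ S) (hd : HasDerivWithinAt f f' S x) :
    f y ≤ f x + f' * (y - x) := by
  rcases lt_trichotomy x y with hxy | rfl | hyx
  · have hslope := hf.slope_le_of_hasDerivWithinAt hx hy hxy hd
    rw [slope_def_field, div_le_iff₀ (sub_pos.2 hxy)] at hslope
    linarith
  · simp
  · have hslope := hf.le_slope_of_hasDerivWithinAt hy hx hyx hd
    rw [slope_def_field, le_div_iff₀ (sub_pos.2 hyx)] at hslope
    linarith

lemma ConcaveOn.isMaxOn_sub_mul_of_hasDerivWithinAt {S : Set ℝ} {f : ℝ → ℝ} {a ν x : ℝ}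
    (hf : ConcaveOn ℝ S f) (hS : S ⊆ Set.Ici 0) (hx : x ∈ S)
    (hd : HasDerivWithinAt f (a - ν) S x) (hν : 0 ≤ ν) (hνx : ν * x = 0) :
    IsMaxOn (fun y => f y - a * y) S x := by
  intro y hy
  have htangent := hf.le_add_mul_sub_of_hasDerivWithinAt hx hy hd
  have hνy : 0 ≤ ν * y := mul_nonneg hν (hS hy)
  show f y - a * y ≤ f x - a * x
  linarith

theorem stmt_3_general (N : ℕ) (p : Fin N → ℝ)
    (U U' : Fin N → ℝ → ℝ)
    (hUconc : ∀ n, StrictConcaveOn ℝ (Set.Icc 0 1) (U n))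
    (hUderiv : ∀ n, ∀ x ∈ Set.Icc (0:ℝ) 1, HasDerivWithinAt (U n) (U' n x) (Set.Icc 0 1) x)
    (q : Fin N → ℝ) (lam : Finset (Fin N) → ℝ) (ν : Fin N → ℝ)
    -- q* is feasible (delivery ratios lie in [0,1])
    (hq0 : ∀ n, 0 ≤ q n) (hq1 : ∀ n, q n ≤ 1)
    -- stationarity
    (hstat : ∀ n, -U' n (q n) + (∑ S : Finset (Fin N), if n ∈ S then lam S else 0) / p n
      - ν n = 0)
    -- complementary slackness
    (hcs2 : ∀ n, ν n * q n = 0)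
    -- dual feasibility
    (hν : ∀ n, 0 ≤ ν n)
    (ψ ρ : Fin N → ℝ)
    (hψ : ∀ n, ψ n = (∑ S : Finset (Fin N), if n ∈ S then lam S else 0) / p n)
    (hρ : ∀ n, ρ n = ψ n * q n) :
    ∀ n, 0 < ψ n →
      ((-(1 / ψ n) * U' n (ρ n / ψ n) + 1 - ν n / ψ n = 0) ∧
        (ν n / ψ n) * ρ n = 0 ∧ 0 ≤ ν n / ψ n) ∧
      ∀ r ∈ Set.Icc (0:ℝ) (ψ n), U n (r / ψ n) - r ≤ U n (ρ n / ψ n) - ρ n := by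
  intro n hψn
  have hq : q n ∈ Set.Icc (0:ℝ) 1 := ⟨hq0 n, hq1 n⟩
  have hU' : U' n (q n) = ψ n - ν n := by linarith [hstat n, hψ n]
  have hρq : ρ n / ψ n = q n := by rw [hρ n, mul_div_cancel_left₀ _ hψn.ne']
  have hmax : IsMaxOn (fun y => U n y - ψ n * y) (Set.Icc 0 1) (q n) :=
    (hUconc n).concaveOn.isMaxOn_sub_mul_of_hasDerivWithinAt (fun _ hy => hy.1) hq
      (hU' ▸ hUderiv n _ hq) (hν n) (hcs2 n)
  refine ⟨⟨?_, ?_, div_nonneg (hν n) hψn.le⟩, fun r hr => ?_⟩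
  · rw [hρq, hU']
    field_simp
    ring
  · rw [hρ n, ← mul_assoc, div_mul_cancel₀ _ hψn.ne', hcs2 n]
  · have hr : r / ψ n ∈ Set.Icc (0:ℝ) 1 :=
      ⟨div_nonneg hr.1 hψn.le, (div_le_one hψn).2 hr.2⟩
    have hle : U n (r / ψ n) - ψ n * (r / ψ n) ≤ U n (q n) - ψ n * q n := hmax hr
    rwa [mul_div_cancel₀ _ hψn.ne', ← hρ n, ← hρq] at hle

/-- First half of Theorem 2: a KKT point of SYSTEM yields solutions of the CLIENT
problems.  Suppose `(q, λ, ν)` satisfies the KKT conditions of SYSTEM.  Define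
`ψ n = (∑_{S ∋ n} λ_S) / p n` and `ρ n = ψ n * q n`.  Then for every `n` with
`ψ n > 0`, the point `ρ n` satisfies the KKT conditions of CLIENT_n with multiplier
`ξ n = ν n / ψ n`, and `ρ n` maximizes `U_n(ρ/ψ_n) - ρ` over `ρ ∈ [0, ψ n]`.
(The utility `U n`, with derivative `U' n` on `[0,1]`, is strictly increasing,
strictly concave and continuously differentiable; the right limit at `0` is assumed
finite so that `U n` is defined on `[0,1]`.) -/
theorem stmt_3 (N : ℕ) (τ : ℝ) (p : Fin N → ℝ) (I : Finset (Fin N) → ℝ)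
    (hp : ∀ n, 0 < p n ∧ p n ≤ 1)
    (U U' : Fin N → ℝ → ℝ)
    (hUmono : ∀ n, StrictMonoOn (U n) (Set.Icc 0 1))
    (hUconc : ∀ n, StrictConcaveOn ℝ (Set.Icc 0 1) (U n))
    (hUderiv : ∀ n, ∀ x ∈ Set.Icc (0:ℝ) 1, HasDerivWithinAt (U n) (U' n x) (Set.Icc 0 1) x)
    (q : Fin N → ℝ) (lam : Finset (Fin N) → ℝ) (ν : Fin N → ℝ)
    -- q* is feasible (delivery ratios lie in [0,1])
    (hq0 : ∀ n, 0 ≤ q n) (hq1 : ∀ n, q n ≤ 1)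
    (hfeas : ∀ S : Finset (Fin N), ∑ i ∈ S, q i / p i ≤ τ - I S)
    -- stationarity
    (hstat : ∀ n, -U' n (q n) + (∑ S : Finset (Fin N), if n ∈ S then lam S else 0) / p n
      - ν n = 0)
    -- complementary slackness
    (hcs1 : ∀ S : Finset (Fin N), lam S * ((∑ i ∈ S, q i / p i) - (τ - I S)) = 0)
    (hcs2 : ∀ n, ν n * q n = 0)
    -- dual feasibility
    (hlam : ∀ S, 0 ≤ lam S) (hν : ∀ n, 0 ≤ ν n)
    (ψ ρ : Fin N → ℝ)
    (hψ : ∀ n, ψ n = (∑ S : Finset (Fin N), if n ∈ S then lam S else 0) / p n)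
    (hρ : ∀ n, ρ n = ψ n * q n) :
    ∀ n, 0 < ψ n →
      ((-(1 / ψ n) * U' n (ρ n / ψ n) + 1 - ν n / ψ n = 0) ∧
        (ν n / ψ n) * ρ n = 0 ∧ 0 ≤ ν n / ψ n) ∧
      ∀ r ∈ Set.Icc (0:ℝ) (ψ n), U n (r / ψ n) - r ≤ U n (ρ n / ψ n) - ρ n :=
  stmt_3_general N p U U' hUconc hUderiv q lam ν hq0 hq1 hstat hcs2 hν ψ ρ hψ hρ
end

section
/- Let q, ρ, ψ be positive vectors with ρ_n = ψ_n q_n for all n. Suppose (i) for each n, ρ_n solves CLIENT_n (maximize U_n(ρ/ψ_n) − ρ over ρ ≥ 0), and (ii) q solves ACCESS-POINT (maximize Σ ρ_i log q_i over the feasible region). Then q solves SYSTEM (maximize Σ U_i(q_i) over the feasible region). -/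
/-!
Client optimality says that `x ↦ U_n(x) - ψ_n x` is maximized over `x ≥ 0` at `q_n`, so
`U_n(x) ≤ U_n(q_n) + ψ_n (x - q_n) = U_n(q_n) + ρ_n (x - q_n) / q_n`. Summing, the right-hand side
exceeds `∑ U_n(q_n)` by the directional derivative of `∑ ρ_n log` at `q` towards `x`, which is
nonpositive by the first-order optimality condition of ACCESS-POINT on the convex feasible region.
-/

open Finset

theorem convex_setOf_forall_sum_div_le {ι : Type*} (p : ι → ℝ) (b : Finset ι → ℝ) :
    Convex ℝ {x : ι → ℝ | ∀ S : Finset ι, ∑ i ∈ S, x i / p i ≤ b S} := by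
  simp only [Set.ofPred_forall]
  refine convex_iInter fun S => convex_halfSpace_le ⟨fun x y => ?_, fun c x => ?_⟩ (b S)
  · simp only [Pi.add_apply, add_div, sum_add_distrib]
  · simp only [Pi.smul_apply, smul_eq_mul, mul_div_assoc, mul_sum]

theorem sum_mul_sub_div_nonpos_of_isMaxOn {ι : Type*} [Fintype ι] {C : Set (ι → ℝ)}
    (hC : Convex ℝ C) {ρ q x : ι → ℝ} (hq : q ∈ C) (hqpos : ∀ i, 0 < q i)
    (hmax : IsMaxOn (fun y => ∑ i, ρ i * Real.log (y i)) {y ∈ C | ∀ i, 0 < y i} q)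
    (hx : x ∈ C) (hx₀ : ∀ i, 0 ≤ x i) :
    ∑ i, ρ i * (x i - q i) / q i ≤ 0 := by
  have hderiv : HasFDerivAt (fun y => ∑ i, ρ i * Real.log (y i))
      (∑ i, ρ i • (q i)⁻¹ • ContinuousLinearMap.proj i) q :=
    HasFDerivAt.fun_sum fun i _ =>
      ((hasFDerivAt_apply i q).log (hqpos i).ne').const_mul (ρ i)
  -- `x` may vanish somewhere, so only the open segment stays inside the domain of `log`.
  have hsegment : openSegment ℝ q x ⊆ {y ∈ C | ∀ i, 0 < y i} := by
    intro y hy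
    refine ⟨hC.openSegment_subset hq hx hy, fun i => ?_⟩
    obtain ⟨θ, hθ, rfl⟩ := (openSegment_eq_image ℝ q x).subset hy
    have hq_part := mul_pos (sub_pos.2 hθ.2) (hqpos i)
    have hx_part := mul_nonneg hθ.1.le (hx₀ i)
    simp only [Pi.add_apply, Pi.smul_apply, smul_eq_mul]
    linarith
  have := hmax.localize.hasFDerivWithinAt_nonpos hderiv.hasFDerivWithinAt
    (sub_mem_posTangentConeAt_of_openSegment_subset hsegment)
  convert this using 1
  simp only [FunLike.coe_sum, Finset.sum_apply, FunLike.coe_smul, Pi.smul_apply,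
    ContinuousLinearMap.proj_apply, Pi.sub_apply, smul_eq_mul]
  exact sum_congr rfl fun i _ => by ring

theorem sub_mul_le_sub_mul_of_forall_div_sub_le {f : ℝ → ℝ} {ψ q : ℝ} (hψ : 0 < ψ)
    (hmax : ∀ r, 0 ≤ r → f (r / ψ) - r ≤ f (ψ * q / ψ) - ψ * q) {x : ℝ} (hx : 0 ≤ x) :
    f x - ψ * x ≤ f q - ψ * q := by
  simpa only [mul_div_cancel_left₀ _ hψ.ne'] using hmax (ψ * x) (by positivity)

theorem stmt_5_general (N : ℕ) (τ : ℝ) (p : Fin N → ℝ) (I : Finset (Fin N) → ℝ)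
    (U : Fin N → ℝ → ℝ)
    (q ρ ψ : Fin N → ℝ)
    (hqpos : ∀ n, 0 < q n) (hψpos : ∀ n, 0 < ψ n)
    (hρψ : ∀ n, ρ n = ψ n * q n)
    -- (i) ρ n solves CLIENT_n
    (hclient : ∀ n, ∀ r : ℝ, 0 ≤ r → U n (r / ψ n) - r ≤ U n (ρ n / ψ n) - ρ n)
    -- (ii) q solves ACCESS-POINT
    (hqfeas : ∀ S : Finset (Fin N), ∑ i ∈ S, q i / p i ≤ τ - I S)
    (hap : ∀ q' : Fin N → ℝ, (∀ n, 0 < q' n) →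
      (∀ S : Finset (Fin N), ∑ i ∈ S, q' i / p i ≤ τ - I S) →
      ∑ i, ρ i * Real.log (q' i) ≤ ∑ i, ρ i * Real.log (q i)) :
    ∀ q' : Fin N → ℝ, (∀ n, 0 ≤ q' n) →
      (∀ S : Finset (Fin N), ∑ i ∈ S, q' i / p i ≤ τ - I S) →
      ∑ i, U i (q' i) ≤ ∑ i, U i (q i) := by
  intro q' hq'₀ hq'feas
  have hfirstOrder : ∑ i, ρ i * (q' i - q i) / q i ≤ 0 :=
    sum_mul_sub_div_nonpos_of_isMaxOn (convex_setOf_forall_sum_div_le p fun S => τ - I S)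
      hqfeas hqpos (isMaxOn_iff.2 fun y hy => hap y hy.2 hy.1) hq'feas hq'₀
  have hsupergradient (i : Fin N) : U i (q' i) ≤ U i (q i) + ρ i * (q' i - q i) / q i := by
    have := sub_mul_le_sub_mul_of_forall_div_sub_le (hψpos i) (hρψ i ▸ hclient i) (hq'₀ i)
    rw [hρψ i, mul_right_comm, mul_div_cancel_right₀ _ (hqpos i).ne']
    linarith
  calc ∑ i, U i (q' i) ≤ ∑ i, (U i (q i) + ρ i * (q' i - q i) / q i) :=
        sum_le_sum fun i _ => hsupergradient i
    _ = ∑ i, U i (q i) + ∑ i, ρ i * (q' i - q i) / q i := sum_add_distrib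
    _ ≤ ∑ i, U i (q i) := by linarith

/-- Converse direction of Theorem 2 (Kelly-style decomposition).  Let `q, ρ, ψ` be
positive vectors with `ρ n = ψ n * q n`.  If (i) for every `n`, `ρ n` solves
CLIENT_n, i.e. it maximizes `U_n(r/ψ_n) - r` over `r ≥ 0`, and (ii) `q` solves
ACCESS-POINT, i.e. `q` is feasible and maximizes `∑ ρ_i log q_i` over the feasible
region, then `q` solves SYSTEM: it maximizes `∑ U_i(q_i)` over the feasible region. -/
theorem stmt_5 (N : ℕ) (τ : ℝ) (p : Fin N → ℝ) (I : Finset (Fin N) → ℝ)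
    (hp : ∀ n, 0 < p n ∧ p n ≤ 1)
    (U : Fin N → ℝ → ℝ)
    (hUmono : ∀ n, StrictMonoOn (U n) (Set.Ioc 0 1))
    (hUconc : ∀ n, StrictConcaveOn ℝ (Set.Ioc 0 1) (U n))
    -- Slater: a strictly interior feasible point exists
    (hSlater : ∃ x : Fin N → ℝ, (∀ n, 0 < x n) ∧
      ∀ S : Finset (Fin N), ∑ i ∈ S, x i / p i < τ - I S)
    (q ρ ψ : Fin N → ℝ)
    (hqpos : ∀ n, 0 < q n) (hρpos : ∀ n, 0 < ρ n) (hψpos : ∀ n, 0 < ψ n)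
    (hρψ : ∀ n, ρ n = ψ n * q n)
    -- (i) ρ n solves CLIENT_n
    (hclient : ∀ n, ∀ r : ℝ, 0 ≤ r → U n (r / ψ n) - r ≤ U n (ρ n / ψ n) - ρ n)
    -- (ii) q solves ACCESS-POINT
    (hqfeas : ∀ S : Finset (Fin N), ∑ i ∈ S, q i / p i ≤ τ - I S)
    (hap : ∀ q' : Fin N → ℝ, (∀ n, 0 < q' n) →
      (∀ S : Finset (Fin N), ∑ i ∈ S, q' i / p i ≤ τ - I S) →
      ∑ i, ρ i * Real.log (q' i) ≤ ∑ i, ρ i * Real.log (q i)) :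
    ∀ q' : Fin N → ℝ, (∀ n, 0 ≤ q' n) →
      (∀ S : Finset (Fin N), ∑ i ∈ S, q' i / p i ≤ τ - I S) →
      ∑ i, U i (q' i) ≤ ∑ i, U i (q i) :=
  stmt_5_general N τ p I U q ρ ψ hqpos hψpos hρψ hclient hqfeas hap
end

section
/- Define recursively H_0 = ∅, and H_k = argmin over S ⊋ H_{k−1} of θ(S, H_{k−1}) := [(I_{H_{k−1}} − I_S)/τ − Σ_{n∈S∖H_{k−1}} b_n/a_n] / (Σ_{n∈S∖H_{k−1}} 1/a_n), with θ_k the minimal value (choosing a maximal minimizer). Then the sequence θ_k is strictly increasing: θ_k > θ_{k−1} for all k > 0. -/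
open Finset

/-!
Write `θ(H, S) = u(H, S) / v(H, S)`. Along a chain `P ⊆ Q ⊆ R` both the numerator `u` and the
positive denominator `v` are additive, so `θ(P, R)` is the mediant of `θ(P, Q)` and `θ(Q, R)`.
With `P = H (k-2)`, `Q = H (k-1)`, `R = H k`: since `Q` is a maximal minimizer and `R ⊋ Q`,
`θ(P, Q) < θ(P, R)`, and a mediant lies strictly above `θ(P, Q)` only if `θ(Q, R)` does.
-/

theorem div_lt_div_of_div_lt_add_div_add {K : Type*} [Field K] [LinearOrder K]
    [IsStrictOrderedRing K] {n₁ n₂ d₁ d₂ : K} (hd₁ : 0 < d₁) (hd₂ : 0 < d₂)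
    (h : n₁ / d₁ < (n₁ + n₂) / (d₁ + d₂)) : n₁ / d₁ < n₂ / d₂ := by
  rw [div_lt_div_iff₀ hd₁ (add_pos hd₁ hd₂)] at h
  rw [div_lt_div_iff₀ hd₁ hd₂]
  linarith

namespace WaterFilling

variable {ι : Type*} [DecidableEq ι]

noncomputable def num (τ : ℝ) (a b : ι → ℝ) (I : Finset ι → ℝ) (H S : Finset ι) : ℝ :=
  (I H - I S) / τ - ∑ n ∈ S \ H, b n / a n

noncomputable def den (a : ι → ℝ) (H S : Finset ι) : ℝ :=
  ∑ n ∈ S \ H, 1 / a n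

variable {τ : ℝ} {a b : ι → ℝ} {I : Finset ι → ℝ} {P Q R : Finset ι}

theorem num_add_num (hPQ : P ⊆ Q) (hQR : Q ⊆ R) :
    num τ a b I P Q + num τ a b I Q R = num τ a b I P R := by
  simp only [num, sum_sdiff_eq_sub hPQ, sum_sdiff_eq_sub hQR, sum_sdiff_eq_sub (hPQ.trans hQR)]
  ring

theorem den_add_den (hPQ : P ⊆ Q) (hQR : Q ⊆ R) : den a P Q + den a Q R = den a P R := by
  simp only [den, sum_sdiff_eq_sub hPQ, sum_sdiff_eq_sub hQR, sum_sdiff_eq_sub (hPQ.trans hQR)]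
  ring

theorem den_pos (ha : ∀ n, 0 < a n) (hPQ : P ⊂ Q) : 0 < den a P Q :=
  sum_pos (fun n _ ↦ one_div_pos.mpr (ha n)) (sdiff_nonempty.mpr hPQ.2)

theorem num_div_den_lt_of_maximal_minimizer (ha : ∀ n, 0 < a n) (hPQ : P ⊂ Q) (hQR : Q ⊂ R)
    (hmin : num τ a b I P Q / den a P Q ≤ num τ a b I P R / den a P R)
    (hmax : num τ a b I P R / den a P R = num τ a b I P Q / den a P Q → R ⊆ Q) :
    num τ a b I P Q / den a P Q < num τ a b I Q R / den a Q R := by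
  have hlt : num τ a b I P Q / den a P Q < num τ a b I P R / den a P R :=
    hmin.lt_of_ne fun h ↦ hQR.2 (hmax h.symm)
  rw [← num_add_num hPQ.subset hQR.subset, ← den_add_den hPQ.subset hQR.subset] at hlt
  exact div_lt_div_of_div_lt_add_div_add (den_pos ha hPQ) (den_pos ha hQR) hlt

end WaterFilling

theorem stmt_9_general (N : ℕ) (τ : ℝ)
    (a b : Fin N → ℝ) (ha : ∀ n, 0 < a n)
    (I : Finset (Fin N) → ℝ)
    (K : ℕ) (H : ℕ → Finset (Fin N)) (θ : ℕ → ℝ)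
    (hrec : ∀ k, 1 ≤ k → k ≤ K →
      H (k-1) ⊂ H k ∧
      θ k = ((I (H (k-1)) - I (H k)) / τ - ∑ n ∈ H k \ H (k-1), b n / a n) /
            (∑ n ∈ H k \ H (k-1), 1 / a n) ∧
      (∀ S : Finset (Fin N), H (k-1) ⊂ S →
        θ k ≤ ((I (H (k-1)) - I S) / τ - ∑ n ∈ S \ H (k-1), b n / a n) /
              (∑ n ∈ S \ H (k-1), 1 / a n)) ∧
      (∀ S : Finset (Fin N), H (k-1) ⊂ S →
        ((I (H (k-1)) - I S) / τ - ∑ n ∈ S \ H (k-1), b n / a n) /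
          (∑ n ∈ S \ H (k-1), 1 / a n) = θ k → S ⊆ H k)) :
    ∀ k, 2 ≤ k → k ≤ K → θ (k-1) < θ k := by
  intro k hk2 hkK
  obtain ⟨hPQ, hθPQ, hmin, hmax⟩ := hrec (k - 1) (by omega) (by omega)
  obtain ⟨hQR, hθQR, -, -⟩ := hrec k (by omega) hkK
  have hPR := hPQ.trans hQR
  rw [hθPQ, hθQR]
  exact WaterFilling.num_div_den_lt_of_maximal_minimizer ha hPQ hQR (hθPQ ▸ hmin _ hPR)
    (fun h ↦ hmax _ hPR (h.trans hθPQ.symm))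

/-- Strict monotonicity of the values `θ k` in the water-filling decomposition used
in the convergence proof of the generalized transmission time policy.  `H 0 = ∅`,
and for each `1 ≤ k ≤ K`, `H k` is a maximal minimizer over `S ⊋ H (k-1)` of
`θ(S, H (k-1)) = ((I_{H (k-1)} - I_S)/τ - ∑_{n ∈ S \ H (k-1)} b n / a n) /
(∑_{n ∈ S \ H (k-1)} 1 / a n)`, with `θ k` the minimal value (`θ 0 = -∞` is
implicit, so only `k ≥ 2` is asserted).  Then `θ (k-1) < θ k`. -/
theorem stmt_9 (N : ℕ) (τ : ℝ) (hτ : 0 < τ)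
    (a b : Fin N → ℝ) (ha : ∀ n, 0 < a n) (hb : ∀ n, 0 ≤ b n)
    (I : Finset (Fin N) → ℝ)
    (hI : ∀ S, 0 ≤ I S ∧ I S ≤ τ) (hIempty : I ∅ = τ)
    (hImono : ∀ S T : Finset (Fin N), S ⊆ T → I T ≤ I S)
    (K : ℕ) (H : ℕ → Finset (Fin N)) (θ : ℕ → ℝ)
    (hH0 : H 0 = ∅)
    (hrec : ∀ k, 1 ≤ k → k ≤ K →
      H (k-1) ⊂ H k ∧
      θ k = ((I (H (k-1)) - I (H k)) / τ - ∑ n ∈ H k \ H (k-1), b n / a n) /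
            (∑ n ∈ H k \ H (k-1), 1 / a n) ∧
      (∀ S : Finset (Fin N), H (k-1) ⊂ S →
        θ k ≤ ((I (H (k-1)) - I S) / τ - ∑ n ∈ S \ H (k-1), b n / a n) /
              (∑ n ∈ S \ H (k-1), 1 / a n)) ∧
      (∀ S : Finset (Fin N), H (k-1) ⊂ S →
        ((I (H (k-1)) - I S) / τ - ∑ n ∈ S \ H (k-1), b n / a n) /
          (∑ n ∈ S \ H (k-1), 1 / a n) = θ k → S ⊆ H k)) :
    ∀ k, 2 ≤ k → k ≤ K → θ (k-1) < θ k :=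
  stmt_9_general N τ a b ha I K H θ hrec
end

section
/- With the recursive decomposition H_0 ⊂ H_1 ⊂ … ⊂ H_K = {1,…,N} and values θ_1 < … < θ_K as defined from parameters (a_n, b_n) and constants I_S, define q_n = τ p_n (b_n + θ_k)/a_n for n ∈ H_k ∖ H_{k−1} and w_n = q_n/p_n. Then Σ_{n∈H_k} w_n = τ − I_{H_k} for every k = 1,…,K. -/
open Finset

/-! On each layer `H k \ H (k-1)` the value `θ k` is exactly the water level at which the
workloads of the layer add up to `I (H (k-1)) - I (H k)`; these layer sums telescope,
starting from `I ∅ = τ`. -/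

theorem sum_eq_of_water_level {ι : Type*} {s : Finset ι} {a b w : ι → ℝ} {τ θ c : ℝ}
    (hτ : τ ≠ 0) (hs : ∑ n ∈ s, 1 / a n ≠ 0)
    (hθ : θ = (c / τ - ∑ n ∈ s, b n / a n) / ∑ n ∈ s, 1 / a n)
    (hw : ∀ n ∈ s, w n = τ * (b n + θ) / a n) :
    ∑ n ∈ s, w n = c := by
  calc ∑ n ∈ s, w n = τ * (∑ n ∈ s, b n / a n + θ * ∑ n ∈ s, 1 / a n) := by
        rw [mul_sum, mul_add, mul_sum, mul_sum, ← sum_add_distrib]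
        refine sum_congr rfl fun n hn => ?_
        rw [hw n hn]
        ring
    _ = c := by
        rw [hθ, div_mul_cancel₀ _ hs]
        field_simp
        ring

theorem sum_add_eq_of_sum_sdiff_eq_sub {ι : Type*} [DecidableEq ι] {H : ℕ → Finset ι}
    {w : ι → ℝ} {f : ℕ → ℝ} {K : ℕ} (hmono : ∀ k < K, H k ⊆ H (k + 1))
    (hstep : ∀ k < K, ∑ n ∈ H (k + 1) \ H k, w n = f k - f (k + 1)) :
    ∀ k ≤ K, ∑ n ∈ H k, w n + f k = ∑ n ∈ H 0, w n + f 0 := by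
  intro k hk
  induction k with
  | zero => rfl
  | succ k ih =>
    rw [← sum_sdiff (hmono k hk), hstep k hk, ← ih (by omega)]
    ring

theorem stmt_10_general (N : ℕ) (τ : ℝ) (hτ : 0 < τ)
    (a b : Fin N → ℝ) (ha : ∀ n, 0 < a n)
    (I : Finset (Fin N) → ℝ)
    (hIempty : I ∅ = τ)
    (K : ℕ) (H : ℕ → Finset (Fin N)) (θ : ℕ → ℝ)
    (hH0 : H 0 = ∅)
    (hchain : ∀ k, 1 ≤ k → k ≤ K → H (k-1) ⊂ H k)
    (hθ : ∀ k, 1 ≤ k → k ≤ K →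
      θ k = ((I (H (k-1)) - I (H k)) / τ - ∑ n ∈ H k \ H (k-1), b n / a n) /
            (∑ n ∈ H k \ H (k-1), 1 / a n))
    (w : Fin N → ℝ)
    (hw : ∀ k, 1 ≤ k → k ≤ K → ∀ n ∈ H k \ H (k-1), w n = τ * (b n + θ k) / a n) :
    ∀ k, 1 ≤ k → k ≤ K → ∑ n ∈ H k, w n = τ - I (H k) := by
  have hchain' : ∀ k < K, H k ⊂ H (k + 1) := fun k hk => hchain (k + 1) (by omega) hk
  have hlayer : ∀ k < K, ∑ n ∈ H (k + 1) \ H k, w n = I (H k) - I (H (k + 1)) := by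
    intro k hk
    have hne : (H (k + 1) \ H k).Nonempty := sdiff_nonempty.2 (hchain' k hk).2
    exact sum_eq_of_water_level hτ.ne'
      (sum_pos (fun n _ => one_div_pos.2 (ha n)) hne).ne'
      (hθ (k + 1) (by omega) hk) (hw (k + 1) (by omega) hk)
  intro k _ hk
  have htel := sum_add_eq_of_sum_sdiff_eq_sub (fun k hk => (hchain' k hk).subset) hlayer k hk
  rw [hH0, sum_empty, hIempty] at htel
  linarith

/-- Total-workload identity for the water-filling decomposition: with
`H 0 = ∅ ⊂ H 1 ⊂ … ⊂ H K` and `θ k` the value of the minimized ratio at step `k`,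
the workloads `w n = τ (b n + θ k) / a n` for `n ∈ H k \ H (k-1)` satisfy
`∑_{n ∈ H k} w n = τ - I (H k)` for every `k = 1,…,K` (telescoping, with
`I ∅ = τ`). -/
theorem stmt_10 (N : ℕ) (τ : ℝ) (hτ : 0 < τ)
    (a b : Fin N → ℝ) (ha : ∀ n, 0 < a n) (hb : ∀ n, 0 ≤ b n)
    (I : Finset (Fin N) → ℝ)
    (hI : ∀ S, 0 ≤ I S ∧ I S ≤ τ) (hIempty : I ∅ = τ)
    (K : ℕ) (H : ℕ → Finset (Fin N)) (θ : ℕ → ℝ)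
    (hH0 : H 0 = ∅)
    (hchain : ∀ k, 1 ≤ k → k ≤ K → H (k-1) ⊂ H k)
    (hθ : ∀ k, 1 ≤ k → k ≤ K →
      θ k = ((I (H (k-1)) - I (H k)) / τ - ∑ n ∈ H k \ H (k-1), b n / a n) /
            (∑ n ∈ H k \ H (k-1), 1 / a n))
    (w : Fin N → ℝ)
    (hw : ∀ k, 1 ≤ k → k ≤ K → ∀ n ∈ H k \ H (k-1), w n = τ * (b n + θ k) / a n) :
    ∀ k, 1 ≤ k → k ≤ K → ∑ n ∈ H k, w n = τ - I (H k) :=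
  stmt_10_general N τ hτ a b ha I hIempty K H θ hH0 hchain hθ w hw
end

section
/- The vector w with w_n = τ(b_n + θ_k)/a_n for n ∈ H_k ∖ H_{k−1} is the unique vector in the set {w′ : w′_n ≥ w_n for all n} satisfying the feasibility constraints Σ_{n∈S} w′_n ≤ τ − I_S for all subsets S. That is, any w′ ≠ w with w′ ≥ w componentwise violates Σ_{n∈H_k} w′_n ≤ τ − I_{H_k} for some k. -/
open Finset

theorem stmt_11_general (N : ℕ) (τ : ℝ)
    (I : Finset (Fin N) → ℝ)
    (K : ℕ) (H : ℕ → Finset (Fin N))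
    (hH0 : H 0 = ∅) (hHK : H K = Finset.univ)
    (w : Fin N → ℝ)
    -- the key property of the decomposition (cf. the previous statement)
    (hlayer : ∀ k, 1 ≤ k → k ≤ K → ∑ n ∈ H k, w n = τ - I (H k))
    (w' : Fin N → ℝ) (hge : ∀ n, w n ≤ w' n) (hne : w' ≠ w) :
    ∃ k, 1 ≤ k ∧ k ≤ K ∧ τ - I (H k) < ∑ n ∈ H k, w' n := by
  have hlt : w < w' := lt_of_le_of_ne hge hne.symm
  -- `K = 0` would make `Fin N` empty, leaving no room for `w' ≠ w`.
  have hK : 1 ≤ K := by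
    rcases Nat.eq_zero_or_pos K with rfl | hK
    · have : IsEmpty (Fin N) := univ_eq_empty_iff.mp (hHK.symm.trans hH0)
      exact absurd (Subsingleton.elim w' w) hne
    · exact hK
  -- The constraint for the whole population `H K = univ` is tight at `w`.
  refine ⟨K, hK, le_rfl, ?_⟩
  rw [← hlayer K hK le_rfl, hHK]
  exact Fintype.sum_strictMono hlt

/-- Uniqueness step of the convergence proof: the workload vector `w`, with
`w n = τ (b n + θ k) / a n` for `n ∈ H k \ H (k-1)`, is the unique feasible vector in
the upper set `{w' : w' ≥ w}`.  Concretely, any `w' ≠ w` with `w' ≥ w` componentwise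
violates one of the constraints `∑_{n ∈ H k} w'_n ≤ τ - I (H k)`. -/
theorem stmt_11 (N : ℕ) (τ : ℝ) (hτ : 0 < τ)
    (a b : Fin N → ℝ) (ha : ∀ n, 0 < a n) (hb : ∀ n, 0 ≤ b n)
    (I : Finset (Fin N) → ℝ)
    (hI : ∀ S, 0 ≤ I S ∧ I S ≤ τ)
    (K : ℕ) (H : ℕ → Finset (Fin N)) (θ : ℕ → ℝ)
    (hH0 : H 0 = ∅) (hHK : H K = Finset.univ)
    (hchain : ∀ k, 1 ≤ k → k ≤ K → H (k-1) ⊂ H k)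
    (w : Fin N → ℝ)
    (hw : ∀ k, 1 ≤ k → k ≤ K → ∀ n ∈ H k \ H (k-1), w n = τ * (b n + θ k) / a n)
    -- the key property of the decomposition (cf. the previous statement)
    (hlayer : ∀ k, 1 ≤ k → k ≤ K → ∑ n ∈ H k, w n = τ - I (H k))
    (w' : Fin N → ℝ) (hge : ∀ n, w n ≤ w' n) (hne : w' ≠ w) :
    ∃ k, 1 ≤ k ∧ k ≤ K ∧ τ - I (H k) < ∑ n ∈ H k, w' n :=
  stmt_11_general N τ I K H hH0 hHK w hlayer w' hge hne
end

section
/- For the WT policy decomposition (a_n = 1/ρ_n, b_n = 0), the delivery ratios q_n = τ p_n θ_k ρ_n for n ∈ H_k∖H_{k−1}, together with multipliers μ_n = 0, ζ_{H_K} = 1/(τθ_K), ζ_{H_k} = 1/(τθ_k) − 1/(τθ_{k+1}) for 1 ≤ k ≤ K−1, and ζ_S = 0 for all other S, satisfy the KKT conditions of ACCESS-POINT; hence q maximizes Σ ρ_i log q_i over the feasible region. -/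
/-!
The multipliers are the successive differences `ζ (H k) = g k - g (k + 1)` of the decreasing
sequence `g k = 1 / (τ θ k)`, `g (K + 1) = 0`. They are nonnegative and live on the tight
constraints `H k` only; and for `n` in the layer `H k \ H (k - 1)` the constraints containing `n`
are `H k, …, H K`, whose multipliers telescope to `1 / (τ θ k) = p n ρ n / q n`, which is
stationarity. As the objective is concave, KKT suffices: bounding `log` by its tangent at `q`,
the gain `∑ ρ i (log q' i - log q i)` is at most `∑ S, ζ S (∑ i ∈ S, (q' i - q i) / p i)`, and by
complementary slackness each term is `ζ S` times the slack of `q'` in `S`, hence `≤ 0`.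
-/

open Finset

section KKT

variable {ι : Type*} [Fintype ι] [DecidableEq ι]

lemma mul_log_sub_mul_log_le {r x y : ℝ} (hr : 0 ≤ r) (hx : 0 < x) (hy : 0 < y) :
    r * Real.log y - r * Real.log x ≤ r / x * (y - x) := by
  have hlog := Real.log_le_sub_one_of_pos (div_pos hy hx)
  rw [Real.log_div hy.ne' hx.ne'] at hlog
  calc r * Real.log y - r * Real.log x = r * (Real.log y - Real.log x) := by ring
    _ ≤ r * (y / x - 1) := mul_le_mul_of_nonneg_left hlog hr
    _ = r / x * (y - x) := by field_simp

lemma sum_sum_ite_mem_mul (ζ : Finset ι → ℝ) (x : ι → ℝ) :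
    ∑ i, (∑ S : Finset ι, if i ∈ S then ζ S else 0) * x i =
      ∑ S : Finset ι, ζ S * ∑ i ∈ S, x i := by
  simp only [sum_mul, ite_mul, zero_mul, mul_sum]
  rw [sum_comm]
  simp

theorem sum_mul_log_le_of_kkt {ρ p q μ : ι → ℝ} {c ζ : Finset ι → ℝ}
    (hρ : ∀ i, 0 ≤ ρ i) (hq : ∀ i, 0 < q i) (hζ : ∀ S, 0 ≤ ζ S) (hμ : ∀ i, 0 ≤ μ i)
    (hstat : ∀ i, -ρ i / q i + (∑ S : Finset ι, if i ∈ S then ζ S else 0) / p i - μ i = 0)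
    (hslack : ∀ S, ζ S * (∑ i ∈ S, q i / p i - c S) = 0) (hμq : ∀ i, μ i * q i = 0)
    {q' : ι → ℝ} (hq' : ∀ i, 0 < q' i) (hfeas : ∀ S, ∑ i ∈ S, q' i / p i ≤ c S) :
    ∑ i, ρ i * Real.log (q' i) ≤ ∑ i, ρ i * Real.log (q i) := by
  have hgrad : ∀ i, ρ i / q i * (q' i - q i) =
      (∑ S : Finset ι, if i ∈ S then ζ S else 0) * ((q' i - q i) / p i) - μ i * q' i := by
    intro i
    have hρq : ρ i / q i = (∑ S : Finset ι, if i ∈ S then ζ S else 0) / p i - μ i := by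
      linarith [hstat i, neg_div (q i) (ρ i)]
    rw [hρq]
    linear_combination (hμq i)
  have hconstraint : ∀ S, ζ S * ∑ i ∈ S, (q' i - q i) / p i ≤ 0 := by
    intro S
    have : ζ S * (∑ i ∈ S, q' i / p i - c S) ≤ 0 :=
      mul_nonpos_of_nonneg_of_nonpos (hζ S) (sub_nonpos.mpr (hfeas S))
    simp only [sub_div, sum_sub_distrib]
    linarith [hslack S]
  have hlin : ∑ i, ρ i / q i * (q' i - q i) ≤ 0 := by
    simp only [hgrad, sum_sub_distrib, sum_sum_ite_mem_mul]
    have := sum_nonpos fun S (_ : S ∈ univ) => hconstraint S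
    have := sum_nonneg fun i (_ : i ∈ univ) => mul_nonneg (hμ i) (hq' i).le
    linarith
  have := sum_le_sum fun i (_ : i ∈ univ) => mul_log_sub_mul_log_le (hρ i) (hq i) (hq' i)
  rw [sum_sub_distrib] at this
  linarith

end KKT

section Layering

variable {ι : Type*} [Fintype ι] {H : ℕ → Finset ι} {K : ℕ}

structure IsLayering (H : ℕ → Finset ι) (K : ℕ) : Prop where
  bot : H 0 = ∅
  top : H K = univ
  ssubset : ∀ k, 1 ≤ k → k ≤ K → H (k - 1) ⊂ H k

noncomputable def layer (H : ℕ → Finset ι) (i : ι) : ℕ := sInf {k | i ∈ H k}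

namespace IsLayering

lemma strictMonoOn (hH : IsLayering H K) : StrictMonoOn H (Set.Iic K) :=
  strictMonoOn_Iic_of_lt_succ fun m hm => by
    simpa using hH.ssubset (m + 1) (by omega) (Order.add_one_le_of_lt hm)

lemma layer_le (hH : IsLayering H K) (i : ι) : layer H i ≤ K :=
  Nat.sInf_le (by simp [hH.top])

lemma mem_layer (hH : IsLayering H K) (i : ι) : i ∈ H (layer H i) :=
  Nat.sInf_mem (s := {k | i ∈ H k}) ⟨K, by simp [hH.top]⟩

lemma mem_iff_layer_le (hH : IsLayering H K) {i : ι} {k : ℕ} (hk : k ≤ K) :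
    i ∈ H k ↔ layer H i ≤ k :=
  ⟨fun hi => Nat.sInf_le hi, fun hle =>
    hH.strictMonoOn.monotoneOn (hH.layer_le i) hk hle (hH.mem_layer i)⟩

lemma one_le_layer (hH : IsLayering H K) (i : ι) : 1 ≤ layer H i := by
  by_contra h
  simpa [Nat.lt_one_iff.mp (not_le.mp h), hH.bot] using hH.mem_layer i

lemma mem_sdiff_layer [DecidableEq ι] (hH : IsLayering H K) (i : ι) :
    i ∈ H (layer H i) \ H (layer H i - 1) := by
  have := hH.one_le_layer i
  rw [mem_sdiff, hH.mem_iff_layer_le (k := layer H i - 1) (by have := hH.layer_le i; omega)]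
  exact ⟨hH.mem_layer i, by omega⟩

end IsLayering

end Layering

section ChainMultiplier

variable {ι : Type*} [DecidableEq ι] {H : ℕ → Finset ι} {K : ℕ} {g : ℕ → ℝ}

def chainMultiplier (H : ℕ → Finset ι) (K : ℕ) (g : ℕ → ℝ) (S : Finset ι) : ℝ :=
  ∑ k ∈ Icc 1 K, if S = H k then g k - g (k + 1) else 0

lemma chainMultiplier_eq_zero {S : Finset ι} (hS : ∀ k, 1 ≤ k → k ≤ K → S ≠ H k) :
    chainMultiplier H K g S = 0 :=
  sum_eq_zero fun k hk => if_neg (hS k (mem_Icc.mp hk).1 (mem_Icc.mp hk).2)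

lemma chainMultiplier_nonneg (hg : ∀ k, 1 ≤ k → k ≤ K → g (k + 1) ≤ g k) (S : Finset ι) :
    0 ≤ chainMultiplier H K g S :=
  sum_nonneg fun k hk => by
    split_ifs
    · exact sub_nonneg.mpr (hg k (mem_Icc.mp hk).1 (mem_Icc.mp hk).2)
    · exact le_rfl

lemma chainMultiplier_mul_eq_zero {F : Finset ι → ℝ} (hF : ∀ k, 1 ≤ k → k ≤ K → F (H k) = 0)
    (S : Finset ι) : chainMultiplier H K g S * F S = 0 := by
  by_cases hS : ∃ k, 1 ≤ k ∧ k ≤ K ∧ S = H k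
  · obtain ⟨k, hk1, hkK, rfl⟩ := hS
    rw [hF k hk1 hkK, mul_zero]
  · push Not at hS
    rw [chainMultiplier_eq_zero hS, zero_mul]

namespace IsLayering

lemma chainMultiplier_apply [Fintype ι] (hH : IsLayering H K) {k : ℕ} (hk1 : 1 ≤ k)
    (hkK : k ≤ K) :
    chainMultiplier H K g (H k) = g k - g (k + 1) := by
  rw [chainMultiplier, sum_eq_single_of_mem k (mem_Icc.mpr ⟨hk1, hkK⟩), if_pos rfl]
  intro j hj hjk
  exact if_neg fun h => hjk (hH.strictMonoOn.injOn (mem_Icc.mp hj).2 hkK h.symm)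

lemma sum_ite_mem_chainMultiplier [Fintype ι] (hH : IsLayering H K) (i : ι) :
    ∑ S : Finset ι, (if i ∈ S then chainMultiplier H K g S else 0) =
      g (layer H i) - g (K + 1) := by
  calc _ = ∑ k ∈ Icc 1 K, if i ∈ H k then g k - g (k + 1) else 0 := by
          simp only [chainMultiplier, ite_sum_zero]
          rw [sum_comm]
          refine sum_congr rfl fun k _ => ?_
          rw [← sum_filter, sum_ite_eq']
          simp
    _ = ∑ k ∈ Icc (layer H i) K, (g k - g (k + 1)) := by
          rw [← sum_filter]
          congr 1
          ext k
          simp only [mem_filter, mem_Icc]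
          constructor
          · rintro ⟨⟨-, hkK⟩, hi⟩
            exact ⟨(hH.mem_iff_layer_le hkK).mp hi, hkK⟩
          · rintro ⟨hle, hkK⟩
            exact ⟨⟨(hH.one_le_layer i).trans hle, hkK⟩, (hH.mem_iff_layer_le hkK).mpr hle⟩
    _ = _ := by
          simpa only [neg_sub_neg] using sum_Icc_sub (hH.layer_le i) (fun k => -g k)

end IsLayering

end ChainMultiplier

section WT

/-- Reads `θ (K + 1) = ∞`, so that `ζ (H K) = 1 / (τ θ K)` is a difference
`g K - g (K + 1)` too. -/
noncomputable def wtPrice (τ : ℝ) (θ : ℕ → ℝ) (K k : ℕ) : ℝ :=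
  if k ≤ K then 1 / (τ * θ k) else 0

variable {τ : ℝ} {θ : ℕ → ℝ} {K : ℕ}

lemma wtPrice_of_le {k : ℕ} (hk : k ≤ K) : wtPrice τ θ K k = 1 / (τ * θ k) := if_pos hk

lemma wtPrice_add_one_self : wtPrice τ θ K (K + 1) = 0 := if_neg (by omega)

lemma wtPrice_add_one_le (hτ : 0 < τ) (hθpos : ∀ k, 1 ≤ k → k ≤ K → 0 < θ k)
    (hθmono : ∀ k j, 1 ≤ k → k < j → j ≤ K → θ k < θ j) {k : ℕ} (hk1 : 1 ≤ k) (hkK : k ≤ K) :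
    wtPrice τ θ K (k + 1) ≤ wtPrice τ θ K k := by
  have hθk := hθpos k hk1 hkK
  rw [wtPrice_of_le hkK]
  rcases hkK.lt_or_eq with hlt | rfl
  · rw [wtPrice_of_le hlt]
    gcongr
    exact (hθmono k (k + 1) hk1 (by omega) hlt).le
  · rw [wtPrice_add_one_self]
    positivity

end WT

theorem stmt_12_general (N : ℕ) (τ : ℝ) (hτ : 0 < τ) (p ρ : Fin N → ℝ)
    (hp : ∀ n, 0 < p n ∧ p n ≤ 1) (hρ : ∀ n, 0 < ρ n)
    (I : Finset (Fin N) → ℝ)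
    (K : ℕ) (hK : 1 ≤ K) (H : ℕ → Finset (Fin N)) (θ : ℕ → ℝ)
    (hH0 : H 0 = ∅) (hHK : H K = Finset.univ)
    (hchain : ∀ k, 1 ≤ k → k ≤ K → H (k-1) ⊂ H k)
    (hθ1 : 0 < θ 1)
    (hθmono : ∀ k j, 1 ≤ k → k < j → j ≤ K → θ k < θ j)
    (q : Fin N → ℝ)
    (hq : ∀ k, 1 ≤ k → k ≤ K → ∀ n ∈ H k \ H (k-1), q n = τ * p n * θ k * ρ n)
    (hlayer : ∀ k, 1 ≤ k → k ≤ K → ∑ n ∈ H k, q n / p n = τ - I (H k)) :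
    ∃ (ζ : Finset (Fin N) → ℝ) (μ : Fin N → ℝ),
      (∀ n, μ n = 0) ∧
      ζ (H K) = 1 / (τ * θ K) ∧
      (∀ k, 1 ≤ k → k ≤ K - 1 → ζ (H k) = 1 / (τ * θ k) - 1 / (τ * θ (k+1))) ∧
      (∀ S : Finset (Fin N), (∀ k, 1 ≤ k → k ≤ K → S ≠ H k) → ζ S = 0) ∧
      -- KKT conditions of ACCESS-POINT
      (∀ S, 0 ≤ ζ S) ∧ (∀ n, 0 ≤ μ n) ∧
      (∀ n, -ρ n / q n + (∑ S : Finset (Fin N), if n ∈ S then ζ S else 0) / p n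
        - μ n = 0) ∧
      (∀ S : Finset (Fin N), ζ S * ((∑ i ∈ S, q i / p i) - (τ - I S)) = 0) ∧
      (∀ n, μ n * q n = 0) ∧
      -- hence q solves ACCESS-POINT
      (∀ q' : Fin N → ℝ, (∀ n, 0 < q' n) →
        (∀ S : Finset (Fin N), ∑ i ∈ S, q' i / p i ≤ τ - I S) →
        ∑ i, ρ i * Real.log (q' i) ≤ ∑ i, ρ i * Real.log (q i)) := by
  have hH : IsLayering H K := ⟨hH0, hHK, hchain⟩
  have hθpos : ∀ k, 1 ≤ k → k ≤ K → 0 < θ k := fun k hk1 hkK =>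
    hk1.eq_or_lt.elim (fun h => h ▸ hθ1) fun h => hθ1.trans (hθmono 1 k le_rfl h hkK)
  set ζ := chainMultiplier H K (wtPrice τ θ K) with hζ_def
  have hζ : ∀ S, 0 ≤ ζ S := chainMultiplier_nonneg fun k => wtPrice_add_one_le hτ hθpos hθmono
  have hq_layer : ∀ n, q n = τ * p n * θ (layer H n) * ρ n := fun n =>
    hq _ (hH.one_le_layer n) (hH.layer_le n) n (hH.mem_sdiff_layer n)
  have hθ_layer : ∀ n, 0 < θ (layer H n) := fun n => hθpos _ (hH.one_le_layer n) (hH.layer_le n)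
  have hq_pos : ∀ n, 0 < q n := fun n => by
    rw [hq_layer]
    exact mul_pos (mul_pos (mul_pos hτ (hp n).1) (hθ_layer n)) (hρ n)
  have hstat : ∀ n, -ρ n / q n + (∑ S : Finset (Fin N), if n ∈ S then ζ S else 0) / p n
      - 0 = 0 := fun n => by
    rw [hH.sum_ite_mem_chainMultiplier, wtPrice_add_one_self, wtPrice_of_le (hH.layer_le n),
      hq_layer]
    have hpn := (hp n).1
    have hθn := hθ_layer n
    have hρn := hρ n
    field_simp
    ring
  have hslack : ∀ S, ζ S * ((∑ i ∈ S, q i / p i) - (τ - I S)) = 0 :=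
    chainMultiplier_mul_eq_zero fun k hk1 hkK => sub_eq_zero.mpr (hlayer k hk1 hkK)
  refine ⟨ζ, fun _ => 0, fun _ => rfl, ?_, fun k hk1 hk => ?_, fun S => chainMultiplier_eq_zero,
    hζ, fun _ => le_rfl, hstat, hslack, fun _ => zero_mul _, fun q' hq' hfeas' =>
    sum_mul_log_le_of_kkt (fun n => (hρ n).le) hq_pos hζ (fun _ => le_rfl) hstat hslack
      (fun _ => zero_mul _) hq' hfeas'⟩
  · rw [hζ_def, hH.chainMultiplier_apply hK le_rfl, wtPrice_of_le le_rfl, wtPrice_add_one_self,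
      sub_zero]
  · rw [hζ_def, hH.chainMultiplier_apply hk1 (by omega), wtPrice_of_le (by omega),
      wtPrice_of_le (by omega)]

/-- Theorem 5: the limiting delivery ratios of the WT policy solve ACCESS-POINT.
For the WT decomposition (`a n = 1/ρ n`, `b n = 0`) with layers
`∅ = H 0 ⊂ H 1 ⊂ … ⊂ H K = {1,…,N}` and values `0 < θ 1 < … < θ K`, the delivery
ratios `q n = τ p n θ k ρ n` for `n ∈ H k \ H (k-1)`, together with the multipliers
`μ n = 0`, `ζ (H K) = 1/(τ θ K)`, `ζ (H k) = 1/(τ θ k) - 1/(τ θ (k+1))` for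
`1 ≤ k ≤ K-1` and `ζ S = 0` otherwise, satisfy the KKT conditions of ACCESS-POINT;
hence `q` maximizes `∑ ρ_i log q_i` over the feasible region. -/
theorem stmt_12 (N : ℕ) (τ : ℝ) (hτ : 0 < τ) (p ρ : Fin N → ℝ)
    (hp : ∀ n, 0 < p n ∧ p n ≤ 1) (hρ : ∀ n, 0 < ρ n)
    (I : Finset (Fin N) → ℝ)
    (K : ℕ) (hK : 1 ≤ K) (H : ℕ → Finset (Fin N)) (θ : ℕ → ℝ)
    (hH0 : H 0 = ∅) (hHK : H K = Finset.univ)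
    (hchain : ∀ k, 1 ≤ k → k ≤ K → H (k-1) ⊂ H k)
    (hθ1 : 0 < θ 1)
    (hθmono : ∀ k j, 1 ≤ k → k < j → j ≤ K → θ k < θ j)
    (q : Fin N → ℝ)
    (hq : ∀ k, 1 ≤ k → k ≤ K → ∀ n ∈ H k \ H (k-1), q n = τ * p n * θ k * ρ n)
    (hlayer : ∀ k, 1 ≤ k → k ≤ K → ∑ n ∈ H k, q n / p n = τ - I (H k))
    (hfeas : ∀ S : Finset (Fin N), ∑ i ∈ S, q i / p i ≤ τ - I S) :
    ∃ (ζ : Finset (Fin N) → ℝ) (μ : Fin N → ℝ),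
      (∀ n, μ n = 0) ∧
      ζ (H K) = 1 / (τ * θ K) ∧
      (∀ k, 1 ≤ k → k ≤ K - 1 → ζ (H k) = 1 / (τ * θ k) - 1 / (τ * θ (k+1))) ∧
      (∀ S : Finset (Fin N), (∀ k, 1 ≤ k → k ≤ K → S ≠ H k) → ζ S = 0) ∧
      -- KKT conditions of ACCESS-POINT
      (∀ S, 0 ≤ ζ S) ∧ (∀ n, 0 ≤ μ n) ∧
      (∀ n, -ρ n / q n + (∑ S : Finset (Fin N), if n ∈ S then ζ S else 0) / p n
        - μ n = 0) ∧
      (∀ S : Finset (Fin N), ζ S * ((∑ i ∈ S, q i / p i) - (τ - I S)) = 0) ∧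
      (∀ n, μ n * q n = 0) ∧
      -- hence q solves ACCESS-POINT
      (∀ q' : Fin N → ℝ, (∀ n, 0 < q' n) →
        (∀ S : Finset (Fin N), ∑ i ∈ S, q' i / p i ≤ τ - I S) →
        ∑ i, ρ i * Real.log (q' i) ≤ ∑ i, ρ i * Real.log (q i)) :=
  stmt_12_general N τ hτ p ρ hp hρ I K hK H θ hH0 hHK hchain hθ1 hθmono q hq hlayer
end

section
/- The WT allocation is weighted max-min fair with weights ρ: if q is the WT-achieved vector and q′ is any feasible vector with q′_i > q_i for some i, then there exists j with q′_j < q_j and w_i(q_i)/ρ_i ≥ w_j(q_j)/ρ_j, where w_n(x) = x/p_n. -/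
/-!
Let `k` be the first layer containing `i`. Feasibility of `q'` on `H k` together with the
tightness of `q` there gives `∑_{H k} q'/p ≤ ∑_{H k} q/p`, so the gain at `i` must be paid
for by some `j ∈ H k` with `q' j < q j`. The first layer `m` of `j` satisfies `m ≤ k`, and
the weighted rate `q n / p n / ρ n` equals `τ θ_m` on layer `m`, so monotonicity of `θ`
finishes the proof.
-/

open Finset

theorem Finset.exists_lt_of_sum_le_of_lt {ι M : Type*} [AddCommMonoid M] [LinearOrder M]
    [IsOrderedCancelAddMonoid M] {s : Finset ι} {f g : ι → M}
    (hsum : ∑ n ∈ s, f n ≤ ∑ n ∈ s, g n) {i : ι} (hi : i ∈ s) (hlt : g i < f i) :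
    ∃ j ∈ s, f j < g j := by
  by_contra! hge
  exact (sum_lt_sum hge ⟨i, hi, hlt⟩).not_ge hsum

theorem exists_mem_sdiff_pred_of_mem {α : Type*} [DecidableEq α] {H : ℕ → Finset α}
    (h0 : H 0 = ∅) {a : α} {k : ℕ} (ha : a ∈ H k) : ∃ m, 0 < m ∧ m ≤ k ∧ a ∈ H m \ H (m - 1) := by
  have hex : ∃ m, a ∈ H m := ⟨k, ha⟩
  have hpos : 0 < Nat.find hex := by
    by_contra! h
    simpa [Nat.le_zero.mp h, h0] using Nat.find_spec hex
  exact ⟨Nat.find hex, hpos, Nat.find_le ha,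
    mem_sdiff.mpr ⟨Nat.find_spec hex, Nat.find_min hex (by omega)⟩⟩

theorem stmt_13_general (N : ℕ) (τ : ℝ) (hτ : 0 < τ) (p ρ : Fin N → ℝ)
    (hp : ∀ n, 0 < p n ∧ p n ≤ 1) (hρ : ∀ n, 0 < ρ n)
    (I : Finset (Fin N) → ℝ)
    (K : ℕ) (H : ℕ → Finset (Fin N)) (θ : ℕ → ℝ)
    (hH0 : H 0 = ∅) (hHK : H K = Finset.univ)
    (hθmono : ∀ k j, 1 ≤ k → k < j → j ≤ K → θ k < θ j)
    (q : Fin N → ℝ)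
    (hq : ∀ k, 1 ≤ k → k ≤ K → ∀ n ∈ H k \ H (k-1), q n = τ * p n * θ k * ρ n)
    (hlayer : ∀ k, 1 ≤ k → k ≤ K → ∑ n ∈ H k, q n / p n = τ - I (H k))
    (q' : Fin N → ℝ)
    (hq'feas : ∀ S : Finset (Fin N), ∑ n ∈ S, q' n / p n ≤ τ - I S)
    (i : Fin N) (hi : q i < q' i) :
    ∃ j, q' j < q j ∧ (q j / p j) / ρ j ≤ (q i / p i) / ρ i := by
  have rate : ∀ m, 0 < m → m ≤ K → ∀ n ∈ H m \ H (m - 1), q n / p n / ρ n = τ * θ m := by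
    intro m hm hmK n hn
    rw [hq m hm hmK n hn]
    field_simp [(hp n).1.ne', (hρ n).ne']
  obtain ⟨k, hk, hkK, hik⟩ := exists_mem_sdiff_pred_of_mem hH0 (hHK ▸ mem_univ i)
  obtain ⟨j, hjk, hj⟩ : ∃ j ∈ H k, q' j / p j < q j / p j := by
    refine exists_lt_of_sum_le_of_lt ?_ (mem_sdiff.mp hik).1 ?_
    · exact (hlayer k hk hkK).symm ▸ hq'feas (H k)
    · exact div_lt_div_of_pos_right hi (hp i).1
  obtain ⟨m, hm, hmk, hjm⟩ := exists_mem_sdiff_pred_of_mem hH0 hjk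
  refine ⟨j, (div_lt_div_iff_of_pos_right (hp j).1).mp hj, ?_⟩
  rw [rate m hm (hmk.trans hkK) j hjm, rate k hk hkK i hik]
  have hθ : θ m ≤ θ k := hmk.eq_or_lt.elim (fun h => h ▸ le_rfl)
    fun h => (hθmono m k hm h hkK).le
  exact mul_le_mul_of_nonneg_left hθ hτ.le

/-- Theorem 6: the WT policy is weighted max-min fair with weights `ρ`.  Let `q` be
the WT-achieved vector (`q n = τ p n θ k ρ n` on the layer `H k \ H (k-1)`, with
`∑_{n ∈ H k} q n / p n = τ - I (H k)` for every `k`).  If `q'` is any feasible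
vector with `q' i > q i` for some `i`, then there is a client `j` with `q' j < q j`
and `w_i(q_i)/ρ_i ≥ w_j(q_j)/ρ_j`, where `w_n(x) = x / p n`. -/
theorem stmt_13 (N : ℕ) (τ : ℝ) (hτ : 0 < τ) (p ρ : Fin N → ℝ)
    (hp : ∀ n, 0 < p n ∧ p n ≤ 1) (hρ : ∀ n, 0 < ρ n)
    (I : Finset (Fin N) → ℝ)
    (K : ℕ) (H : ℕ → Finset (Fin N)) (θ : ℕ → ℝ)
    (hH0 : H 0 = ∅) (hHK : H K = Finset.univ)
    (hchain : ∀ k, 1 ≤ k → k ≤ K → H (k-1) ⊂ H k)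
    (hθ1 : 0 < θ 1)
    (hθmono : ∀ k j, 1 ≤ k → k < j → j ≤ K → θ k < θ j)
    (q : Fin N → ℝ)
    (hq : ∀ k, 1 ≤ k → k ≤ K → ∀ n ∈ H k \ H (k-1), q n = τ * p n * θ k * ρ n)
    (hlayer : ∀ k, 1 ≤ k → k ≤ K → ∑ n ∈ H k, q n / p n = τ - I (H k))
    (q' : Fin N → ℝ) (hq'0 : ∀ n, 0 ≤ q' n)
    (hq'feas : ∀ S : Finset (Fin N), ∑ n ∈ S, q' n / p n ≤ τ - I S)
    (i : Fin N) (hi : q i < q' i) :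
    ∃ j, q' j < q j ∧ (q j / p j) / ρ j ≤ (q i / p i) / ρ i :=
  stmt_13_general N τ hτ p ρ hp hρ I K H θ hH0 hHK hθmono q hq hlayer q' hq'feas i hi
end

section
/- The WT allocation is weighted proportionally fair with weights ρ: if q is the WT-achieved vector and q′ any feasible vector, then Σ_{n=1}^N (w_n(q′_n) − w_n(q_n))/(w_n(q_n)/ρ_n) ≤ 0, where w_n(x) = x/p_n. -/
open Finset

/-!
On the `k`-th layer `H k \ H (k-1)` the WT vector has `w_n(q_n) / ρ_n = τ θ_k`, so the sum
equals `∑_k Δ_k / (τ θ_k)` with `Δ_k` the total change of `w` on that layer.  Feasibility of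
`q'` against the tight constraints of `q` on every `H k` makes the partial sums
`Δ_1 + ⋯ + Δ_k` nonpositive, and since the divisors `τ θ_k` increase, summation by parts gives
`∑_k Δ_k / (τ θ_k) ≤ (Δ_1 + ⋯ + Δ_K) / (τ θ_K) ≤ 0`.
-/

theorem sum_Icc_div_le_div_of_partial_sums_nonpos {Δ c : ℕ → ℝ} {K : ℕ}
    (hc : ∀ k ∈ Icc 1 K, 0 < c k) (hmono : MonotoneOn c (Icc 1 K))
    (hS : ∀ k ∈ Icc 1 K, ∑ i ∈ Icc 1 k, Δ i ≤ 0) :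
    ∀ k ≤ K, ∑ i ∈ Icc 1 k, Δ i / c i ≤ (∑ i ∈ Icc 1 k, Δ i) / c k := by
  intro k hk
  induction k with
  | zero => simp
  | succ k ih =>
    rw [sum_Icc_succ_top (by omega), sum_Icc_succ_top (by omega), add_div]
    gcongr ?_ + _
    calc ∑ i ∈ Icc 1 k, Δ i / c i ≤ (∑ i ∈ Icc 1 k, Δ i) / c k := ih (by omega)
      _ ≤ (∑ i ∈ Icc 1 k, Δ i) / c (k + 1) := by
        rcases Nat.eq_zero_or_pos k with rfl | hk0
        · simp
        have hkI : k ∈ Icc 1 K := mem_Icc.2 ⟨hk0, by omega⟩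
        have hkI' : k + 1 ∈ Icc 1 K := mem_Icc.2 ⟨by omega, hk⟩
        rw [div_eq_mul_inv, div_eq_mul_inv]
        exact mul_le_mul_of_nonpos_left
          (inv_anti₀ (hc k hkI) (hmono hkI hkI' (Nat.le_succ k))) (hS k hkI)

theorem sum_Icc_div_nonpos_of_partial_sums_nonpos {Δ c : ℕ → ℝ} {K : ℕ}
    (hc : ∀ k ∈ Icc 1 K, 0 < c k) (hmono : MonotoneOn c (Icc 1 K))
    (hS : ∀ k ∈ Icc 1 K, ∑ i ∈ Icc 1 k, Δ i ≤ 0) :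
    ∑ i ∈ Icc 1 K, Δ i / c i ≤ 0 := by
  refine (sum_Icc_div_le_div_of_partial_sums_nonpos hc hmono hS K le_rfl).trans ?_
  rcases Nat.eq_zero_or_pos K with rfl | hK
  · simp
  have hK : K ∈ Icc 1 K := mem_Icc.2 ⟨hK, le_rfl⟩
  exact div_nonpos_of_nonpos_of_nonneg (hS K hK) (hc K hK).le

theorem sum_eq_sum_Icc_sum_sdiff {α M : Type*} [DecidableEq α] [AddCommMonoid M]
    {H : ℕ → Finset α} {K : ℕ} (hH0 : H 0 = ∅) (hH : ∀ k < K, H k ⊆ H (k + 1)) (f : α → M) :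
    ∀ k ≤ K, ∑ n ∈ H k, f n = ∑ i ∈ Icc 1 k, ∑ n ∈ H i \ H (i - 1), f n := by
  intro k hk
  induction k with
  | zero => simp [hH0]
  | succ k ih =>
    rw [sum_Icc_succ_top (by omega), ← ih (by omega), Nat.add_sub_cancel,
      ← sum_sdiff (hH k (by omega)), add_comm]

theorem stmt_14_general (N : ℕ) (τ : ℝ) (hτ : 0 < τ) (p ρ : Fin N → ℝ)
    (hp : ∀ n, 0 < p n ∧ p n ≤ 1) (hρ : ∀ n, 0 < ρ n)
    (I : Finset (Fin N) → ℝ)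
    (K : ℕ) (H : ℕ → Finset (Fin N)) (θ : ℕ → ℝ)
    (hH0 : H 0 = ∅) (hHK : H K = Finset.univ)
    (hchain : ∀ k, 1 ≤ k → k ≤ K → H (k-1) ⊂ H k)
    (hθ1 : 0 < θ 1)
    (hθmono : ∀ k j, 1 ≤ k → k < j → j ≤ K → θ k < θ j)
    (q : Fin N → ℝ)
    (hq : ∀ k, 1 ≤ k → k ≤ K → ∀ n ∈ H k \ H (k-1), q n = τ * p n * θ k * ρ n)
    (hlayer : ∀ k, 1 ≤ k → k ≤ K → ∑ n ∈ H k, q n / p n = τ - I (H k))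
    (q' : Fin N → ℝ)
    (hq'feas : ∀ S : Finset (Fin N), ∑ n ∈ S, q' n / p n ≤ τ - I S)
:
    ∑ n, (q' n / p n - q n / p n) / ((q n / p n) / ρ n) ≤ 0 := by
  set d : Fin N → ℝ := fun n => q' n / p n - q n / p n
  have hsub : ∀ k < K, H k ⊆ H (k + 1) := fun k hk => (hchain (k + 1) (by omega) hk).subset
  have hlayers := sum_eq_sum_Icc_sum_sdiff hH0 hsub d
  have hweight : ∀ k ∈ Icc 1 K, ∀ n ∈ H k \ H (k - 1), (q n / p n) / ρ n = τ * θ k := by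
    intro k hk n hn
    rw [hq k (mem_Icc.1 hk).1 (mem_Icc.1 hk).2 n hn]
    field_simp [(hp n).1.ne', (hρ n).ne']
  have hsum : ∑ n, d n / ((q n / p n) / ρ n)
      = ∑ k ∈ Icc 1 K, (∑ n ∈ H k \ H (k - 1), d n) / (τ * θ k) := by
    rw [← hHK, sum_eq_sum_Icc_sum_sdiff hH0 hsub _ K le_rfl]
    refine sum_congr rfl fun k hk => ?_
    rw [sum_div]
    exact sum_congr rfl fun n hn => by rw [hweight k hk n hn]
  refine hsum ▸ sum_Icc_div_nonpos_of_partial_sums_nonpos ?_ ?_ ?_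
  · intro k hk
    rcases (mem_Icc.1 hk).1.eq_or_lt with rfl | h1k
    · exact mul_pos hτ hθ1
    · exact mul_pos hτ (hθ1.trans (hθmono 1 k le_rfl h1k (mem_Icc.1 hk).2))
  · intro k hk j hj hkj
    rcases hkj.eq_or_lt with rfl | hkj
    · rfl
    · exact mul_le_mul_of_nonneg_left (hθmono k j (mem_Icc.1 hk).1 hkj (mem_Icc.1 hj).2).le hτ.le
  · intro k hk
    rw [← hlayers k (mem_Icc.1 hk).2, sum_sub_distrib,
      hlayer k (mem_Icc.1 hk).1 (mem_Icc.1 hk).2]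
    exact sub_nonpos.2 (hq'feas (H k))

/-- Theorem 7: the WT policy is weighted proportionally fair with weights `ρ`.  Let
`q` be the WT-achieved vector (`q n = τ p n θ k ρ n` on the layer `H k \ H (k-1)`,
with `∑_{n ∈ H k} q n / p n = τ - I (H k)` for every `k`).  Then for any feasible
`q'`, `∑_n (w_n(q'_n) - w_n(q_n)) / (w_n(q_n)/ρ_n) ≤ 0`, where `w_n(x) = x / p n`. -/
theorem stmt_14 (N : ℕ) (τ : ℝ) (hτ : 0 < τ) (p ρ : Fin N → ℝ)
    (hp : ∀ n, 0 < p n ∧ p n ≤ 1) (hρ : ∀ n, 0 < ρ n)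
    (I : Finset (Fin N) → ℝ)
    (K : ℕ) (H : ℕ → Finset (Fin N)) (θ : ℕ → ℝ)
    (hH0 : H 0 = ∅) (hHK : H K = Finset.univ)
    (hchain : ∀ k, 1 ≤ k → k ≤ K → H (k-1) ⊂ H k)
    (hθ1 : 0 < θ 1)
    (hθmono : ∀ k j, 1 ≤ k → k < j → j ≤ K → θ k < θ j)
    (q : Fin N → ℝ)
    (hq : ∀ k, 1 ≤ k → k ≤ K → ∀ n ∈ H k \ H (k-1), q n = τ * p n * θ k * ρ n)
    (hlayer : ∀ k, 1 ≤ k → k ≤ K → ∑ n ∈ H k, q n / p n = τ - I (H k))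
    (q' : Fin N → ℝ) (hq'0 : ∀ n, 0 ≤ q' n)
    (hq'feas : ∀ S : Finset (Fin N), ∑ n ∈ S, q' n / p n ≤ τ - I S)
:
    ∑ n, (q' n / p n - q n / p n) / ((q n / p n) / ρ n) ≤ 0 :=
  stmt_14_general N τ hτ p ρ hp hρ I K H θ hH0 hHK hchain hθ1 hθmono q hq hlayer q' hq'feas
end
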